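/- arXiv:2312.01424 — 2 statements merged into one kernel-verified Lean document; each statement's English description precedes it below -/
import Mathlib

section
/- Soundness of the neighbor-pruning rule: let p be a walk from s of length ℓ ending at vertex u, and let v be an out-neighbor of u (i.e., E u v holds). If there exists a walk q from s to t of length at most k such that the list of vertices of p followed by v is a prefix of the vertex list of q, then ℓ + 1 + dist(v, t) ≤ k; equivalently, ℓ + dist(v, t) < k. -/
variable {V : Type*}

/-- A walk from `u` to `v`: a nonempty list of vertices starting at `u`, ending at `v`,
with consecutive vertices joined by edges of `E`. Its length (number of hops) is
`p.length - 1`. -/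
def IsWalkFrom (E : V → V → Prop) (u v : V) (p : List V) : Prop :=
  p.Chain' E ∧ p.head? = some u ∧ p.getLast? = some v

/-- A walk starting at `u` (with arbitrary end). -/
def IsWalkStart (E : V → V → Prop) (u : V) (p : List V) : Prop :=
  p.Chain' E ∧ p.head? = some u

/-- Shortest-walk distance from `u` to `v`, in `ℕ∞` (`⊤` if there is no walk). -/
noncomputable def gdist (E : V → V → Prop) (u v : V) : ℕ∞ :=
  sInf ((fun p : List V => ((p.length - 1 : ℕ) : ℕ∞)) '' {p | IsWalkFrom E u v p})

/-- Concatenation of two walks sharing the junction vertex: append `p₂` after `p₁`,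
identifying the shared vertex once. -/
def pconcat (p₁ p₂ : List V) : List V := p₁ ++ p₂.tail

/-- The HC-s path set `P_s(s, k)`: simple paths starting at `s` of length `< k`. -/
def HCsPathSet (E : V → V → Prop) (s : V) (k : ℕ) : Set (List V) :=
  {p | IsWalkStart E s p ∧ p.Nodup ∧ p.length - 1 < k}

namespace IsWalkFrom

variable {E : V → V → Prop} {s t u v : V}

theorem gdist_le {p : List V} (hp : IsWalkFrom E u v p) :
    gdist E u v ≤ ((p.length - 1 : ℕ) : ℕ∞) :=
  sInf_le ⟨p, hp, rfl⟩

theorem of_append_cons {p r : List V} (hq : IsWalkFrom E s t (p ++ v :: r)) :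
    IsWalkFrom E v t (v :: r) := by
  obtain ⟨hchain, -, hlast⟩ := hq
  refine ⟨hchain.suffix (List.suffix_append p _), rfl, ?_⟩
  rwa [List.getLast?_append_of_ne_nil p (List.cons_ne_nil v r)] at hlast

end IsWalkFrom

theorem stmt_3_general (E : V → V → Prop) (s t v : V) (p : List V) (ℓ k : ℕ)
    (hlen : p.length = ℓ + 1)
    (hq : ∃ q : List V, IsWalkFrom E s t q ∧ q.length - 1 ≤ k ∧ (p ++ [v]) <+: q) :
    (ℓ : ℕ∞) + 1 + gdist E v t ≤ (k : ℕ∞) ∧ (ℓ : ℕ∞) + gdist E v t < (k : ℕ∞) := by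
  obtain ⟨_, hq, hqk, r, rfl⟩ := hq
  rw [List.append_assoc, List.singleton_append] at hq hqk
  have hdist : gdist E v t ≤ r.length := by
    simpa using hq.of_append_cons.gdist_le
  have hk : ℓ + 1 + r.length ≤ k := by
    simp only [List.length_append, List.length_cons, hlen] at hqk
    omega
  constructor
  · calc (ℓ : ℕ∞) + 1 + gdist E v t ≤ ℓ + 1 + r.length := by gcongr
      _ ≤ k := by exact_mod_cast hk
  · calc (ℓ : ℕ∞) + gdist E v t ≤ ℓ + r.length := by gcongr
      _ < k := by exact_mod_cast (by omega : ℓ + r.length < k)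

/-- Soundness of the neighbor-pruning rule: if the prefix `p ++ [v]` extends to a walk
from `s` to `t` of length at most `k`, then `ℓ + 1 + dist(v, t) ≤ k`, equivalently
`ℓ + dist(v, t) < k`. -/
theorem stmt_3 (E : V → V → Prop) (s t u v : V) (p : List V) (ℓ k : ℕ)
    (hp : IsWalkFrom E s u p) (hlen : p.length = ℓ + 1) (he : E u v)
    (hq : ∃ q : List V, IsWalkFrom E s t q ∧ q.length - 1 ≤ k ∧ (p ++ [v]) <+: q) :
    (ℓ : ℕ∞) + 1 + gdist E v t ≤ (k : ℕ∞) ∧ (ℓ : ℕ∞) + gdist E v t < (k : ℕ∞) :=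
  stmt_3_general E s t v p ℓ k hlen hq
end

section
/- Extendability of shared sub-paths (Lemma 4.3, walk form): let s, t be vertices, k a natural number, a and b vertices, and k_a ≥ 1, k_b ≥ 1 natural numbers such that dist(s, a) + k_a ≤ ⌈k/2⌉ and dist(b, t) + k_b ≤ ⌊k/2⌋ (in ℕ∞, so in particular dist(s,a) and dist(b,t) are finite). Then for every walk p' from a to b of length at most k_a + k_b − 2, there exists a walk p from s to t of length at most k such that the vertex list of p' occurs as a contiguous sublist of the vertex list of p. -/
variable {V : Type*}

/-! Prepend a shortest walk from `s` to `a` and append a shortest walk from `b` to `t`: the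
result has length at most `(⌈k/2⌉ - k_a) + (k_a + k_b - 2) + (⌊k/2⌋ - k_b) ≤ k`. -/

namespace IsWalkFrom

variable {E : V → V → Prop} {u v w : V} {p q : List V}

theorem exists_eq_append_singleton (hp : IsWalkFrom E u v p) : ∃ ys, p = ys ++ [v] :=
  List.getLast?_eq_some_iff.mp hp.2.2

theorem exists_eq_cons (hp : IsWalkFrom E u v p) : ∃ zs, p = u :: zs :=
  List.head?_eq_some_iff.mp hp.2.1

theorem pconcat_eq_dropLast_append (hp : IsWalkFrom E u v p) (hq : IsWalkFrom E v w q) :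
    pconcat p q = p.dropLast ++ q := by
  obtain ⟨ys, rfl⟩ := hp.exists_eq_append_singleton
  obtain ⟨zs, rfl⟩ := hq.exists_eq_cons
  simp [pconcat]

theorem length_pconcat (hp : IsWalkFrom E u v p) (hq : IsWalkFrom E v w q) :
    (pconcat p q).length - 1 = (p.length - 1) + (q.length - 1) := by
  rw [hp.pconcat_eq_dropLast_append hq]
  obtain ⟨ys, rfl⟩ := hp.exists_eq_append_singleton
  obtain ⟨zs, rfl⟩ := hq.exists_eq_cons
  simp

theorem infix_pconcat_pconcat (hp : IsWalkFrom E u v p) (hq : IsWalkFrom E v w q)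
    (r : List V) : q <:+: pconcat (pconcat p q) r := by
  rw [hp.pconcat_eq_dropLast_append hq]
  exact List.infix_append _ _ _

theorem pconcat (hp : IsWalkFrom E u v p) (hq : IsWalkFrom E v w q) :
    IsWalkFrom E u w (pconcat p q) := by
  obtain ⟨ys, rfl⟩ := hp.exists_eq_append_singleton
  obtain ⟨zs, rfl⟩ := hq.exists_eq_cons
  rw [show _root_.pconcat (ys ++ [v]) (v :: zs) = ys ++ v :: zs by simp [_root_.pconcat]]
  obtain ⟨hchain_p, hhead_p, -⟩ := hp
  obtain ⟨hchain_q, -, hlast_q⟩ := hq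
  obtain ⟨hchain_ys, -, hjoin⟩ := List.isChain_append.mp hchain_p
  refine ⟨List.isChain_append.mpr ⟨hchain_ys, hchain_q, by simpa using hjoin⟩, ?_, ?_⟩
  · cases ys <;> simp_all
  · simpa using hlast_q

end IsWalkFrom

-- `ℕ∞` is well ordered, so the infimum defining `gdist` is attained as soon as it is finite.
theorem exists_isWalkFrom_length_eq_gdist {E : V → V → Prop} {u v : V}
    (h : gdist E u v ≠ ⊤) :
    ∃ p, IsWalkFrom E u v p ∧ ((p.length - 1 : ℕ) : ℕ∞) = gdist E u v := by
  have hne : ((fun p : List V => ((p.length - 1 : ℕ) : ℕ∞)) '' {p | IsWalkFrom E u v p}).Nonempty :=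
    Set.nonempty_iff_ne_empty.mpr fun hempty => h (by rw [gdist, hempty, sInf_empty])
  exact csInf_mem hne

theorem exists_isWalkFrom_of_gdist_add_le {E : V → V → Prop} {u v : V} {n m : ℕ}
    (h : gdist E u v + n ≤ m) : ∃ p, IsWalkFrom E u v p ∧ p.length - 1 + n ≤ m := by
  obtain ⟨p, hp, hlen⟩ := exists_isWalkFrom_length_eq_gdist
    (ne_top_of_le_ne_top (ENat.natCast_ne_top m) (le_self_add.trans h))
  rw [← hlen] at h
  exact ⟨p, hp, by exact_mod_cast h⟩

theorem stmt_9_general (E : V → V → Prop) (s t a b : V) (k ka kb : ℕ)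
    (ha : gdist E s a + (ka : ℕ∞) ≤ (((k + 1) / 2 : ℕ) : ℕ∞))
    (hb : gdist E b t + (kb : ℕ∞) ≤ ((k / 2 : ℕ) : ℕ∞)) :
    ∀ p' : List V, IsWalkFrom E a b p' → p'.length - 1 ≤ ka + kb - 2 →
      ∃ p : List V, IsWalkFrom E s t p ∧ p.length - 1 ≤ k ∧ p' <:+: p := by
  intro p' hp' hlen
  obtain ⟨w₁, hw₁, hw₁len⟩ := exists_isWalkFrom_of_gdist_add_le ha
  obtain ⟨w₂, hw₂, hw₂len⟩ := exists_isWalkFrom_of_gdist_add_le hb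
  refine ⟨pconcat (pconcat w₁ p') w₂, (hw₁.pconcat hp').pconcat hw₂, ?_,
    hw₁.infix_pconcat_pconcat hp' w₂⟩
  rw [(hw₁.pconcat hp').length_pconcat hw₂, hw₁.length_pconcat hp']
  omega

/-- Extendability of shared sub-paths (Lemma 4.3, walk form): if
`dist(s, a) + k_a ≤ ⌈k/2⌉` and `dist(b, t) + k_b ≤ ⌊k/2⌋` (in `ℕ∞`) with
`k_a, k_b ≥ 1`, then every walk `p'` from `a` to `b` of length at most `k_a + k_b - 2`
occurs as a contiguous sublist of some walk `p` from `s` to `t` of length at most `k`. -/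
theorem stmt_9 (E : V → V → Prop) (s t a b : V) (k ka kb : ℕ)
    (hka : 1 ≤ ka) (hkb : 1 ≤ kb)
    (ha : gdist E s a + (ka : ℕ∞) ≤ (((k + 1) / 2 : ℕ) : ℕ∞))
    (hb : gdist E b t + (kb : ℕ∞) ≤ ((k / 2 : ℕ) : ℕ∞)) :
    ∀ p' : List V, IsWalkFrom E a b p' → p'.length - 1 ≤ ka + kb - 2 →
      ∃ p : List V, IsWalkFrom E s t p ∧ p.length - 1 ≤ k ∧ p' <:+: p :=
  stmt_9_general E s t a b k ka kb ha hb
end
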